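/- Value error from latent abstraction: Fix a finite MDP M = ⟨S, A, R, P, γ⟩ with |R(s,a)| ≤ R_max, an encoder Φ : S → C into a finite code set C, and the pushforward kernel P^Φ(c'|s,a) = Σ_{s'} P(s'|s,a)·1{Φ(s')=c'}. Suppose there exist a Markov kernel P̄(·|c,a) on C and reward R̄(c,a) with |R̄(c,a)| ≤ R_max such that for all (s,a): ‖P^Φ(·|s,a) − P̄(·|Φ(s),a)‖₁ ≤ ε_P and |R(s,a) − R̄(Φ(s),a)| ≤ ε_R. Then for any latent policy π : C → distributions on A, lifting π^Φ(a|s) := π(a|Φ(s)), we have sup_s |V_M^{π^Φ}(s) − V_{M̄}^{π}(Φ(s))| ≤ ε_R/(1−γ) + γ R_max ε_P/(1−γ)², where M̄ = ⟨C, A, R̄, P̄, γ⟩. -/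

import Mathlib

/-!
Both value functions are fixed points of their policy Bellman operators: the value is the
Neumann series `∑ γᵏ Kᵏ r` of the row-stochastic policy kernel `K`, so `v = r + γ K v`, and
`|v| ≤ R_max / (1 - γ)`. Subtracting the Bellman equations at `s` and at `Φ s`, the reward gap
contributes `ε_R`, while the transition gap splits as `P (V - W ∘ Φ) + (P^Φ - P̄) W`, bounded by
`‖V - W ∘ Φ‖∞ + ε_P ‖W‖∞`. Hence `e = ‖V - W ∘ Φ‖∞` satisfies
`e ≤ ε_R + γ ε_P R_max / (1 - γ) + γ e`, and solving for `e` gives the bound.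
-/

open Finset Filter Topology

/-- The state distribution at time `n` when starting from state `x0`,
following policy `π` and transition kernel `P`. -/
noncomputable def stateDist {X A : Type*} [Fintype X] [Fintype A] [DecidableEq X]
    (P : X → A → X → ℝ) (π : X → A → ℝ) (x0 : X) : ℕ → X → ℝ
  | 0 => fun x => if x = x0 then 1 else 0
  | n + 1 => fun x' => ∑ x, ∑ a, stateDist P π x0 n x * π x a * P x a x'

/-- The infinite-horizon discounted value of stationary policy `π` in the MDP
with reward `R`, transition kernel `P`, and discount `γ`, starting from `x0`. -/
noncomputable def value {X A : Type*} [Fintype X] [Fintype A] [DecidableEq X]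
    (R : X → A → ℝ) (P : X → A → X → ℝ) (π : X → A → ℝ) (γ : ℝ) (x0 : X) : ℝ :=
  ∑' n : ℕ, γ ^ n * ∑ x, ∑ a, stateDist P π x0 n x * π x a * R x a

/-- The policy Bellman operator. -/
noncomputable def bellmanOp {X A : Type*} [Fintype X] [Fintype A]
    (R : X → A → ℝ) (P : X → A → X → ℝ) (π : X → A → ℝ) (γ : ℝ)
    (V : X → ℝ) : X → ℝ :=
  fun x => ∑ a, π x a * (R x a + γ * ∑ x', P x a x' * V x')

/-- The pushforward transition kernel induced by an encoder `Φ`. -/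
noncomputable def pushKernel {S A C : Type*} [Fintype S] [DecidableEq C]
    (P : S → A → S → ℝ) (Φ : S → C) : S → A → C → ℝ :=
  fun s a c => ∑ s', P s a s' * (if Φ s' = c then 1 else 0)

section WeightedSum

variable {ι : Type*} [Fintype ι]

theorem abs_sum_mul_le_sum_abs_mul (u v : ι → ℝ) {b : ℝ} (hv : ∀ i, |v i| ≤ b) :
    |∑ i, u i * v i| ≤ (∑ i, |u i|) * b := by
  rw [Finset.sum_mul]
  refine (abs_sum_le_sum_abs _ _).trans (Finset.sum_le_sum fun i _ => ?_)
  rw [abs_mul]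
  exact mul_le_mul_of_nonneg_left (hv i) (abs_nonneg _)

theorem abs_sum_mul_le_of_sum_eq_one {w : ι → ℝ} (hw0 : ∀ i, 0 ≤ w i) (hw1 : ∑ i, w i = 1)
    (v : ι → ℝ) {b : ℝ} (hv : ∀ i, |v i| ≤ b) : |∑ i, w i * v i| ≤ b := by
  simpa [abs_of_nonneg (hw0 _), hw1] using abs_sum_mul_le_sum_abs_mul w v hv

end WeightedSum

namespace Matrix

variable {n : Type*} [Fintype n] [DecidableEq n] {M : Matrix n n ℝ}

theorem abs_mulVec_apply_le_of_mem_rowStochastic (hM : M ∈ rowStochastic ℝ n) {v : n → ℝ}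
    {b : ℝ} (hv : ∀ j, |v j| ≤ b) (i : n) : |(M *ᵥ v) i| ≤ b :=
  abs_sum_mul_le_of_sum_eq_one (fun _ => nonneg_of_mem_rowStochastic hM)
    (sum_row_of_mem_rowStochastic hM i) v hv

noncomputable def discountedReturn (M : Matrix n n ℝ) (γ : ℝ) (r : n → ℝ) (i : n) : ℝ :=
  ∑' k : ℕ, γ ^ k * (M ^ k *ᵥ r) i

variable {γ : ℝ} (hγ0 : 0 ≤ γ) (hγ1 : γ < 1)
include hγ0 hγ1

theorem summable_pow_mulVec (hM : M ∈ rowStochastic ℝ n) (r : n → ℝ) :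
    Summable fun k : ℕ => γ ^ k • (M ^ k *ᵥ r) := by
  refine .of_norm_bounded ((summable_geometric_of_lt_one hγ0 hγ1).mul_right ‖r‖) fun k => ?_
  rw [norm_smul, Real.norm_of_nonneg (pow_nonneg hγ0 k)]
  refine mul_le_mul_of_nonneg_left ((pi_norm_le_iff_of_nonneg (norm_nonneg r)).2 fun i => ?_)
    (pow_nonneg hγ0 k)
  exact abs_mulVec_apply_le_of_mem_rowStochastic (pow_mem hM k) (norm_le_pi_norm r) i

theorem discountedReturn_eq_tsum (hM : M ∈ rowStochastic ℝ n) (r : n → ℝ) :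
    discountedReturn M γ r = ∑' k : ℕ, γ ^ k • (M ^ k *ᵥ r) :=
  funext fun _ => (tsum_apply (summable_pow_mulVec hγ0 hγ1 hM r)).symm

theorem discountedReturn_eq_add (hM : M ∈ rowStochastic ℝ n) (r : n → ℝ) :
    discountedReturn M γ r = r + γ • (M *ᵥ discountedReturn M γ r) := by
  have hs := summable_pow_mulVec hγ0 hγ1 hM r
  have hstep : ∀ k : ℕ, γ ^ (k + 1) • (M ^ (k + 1) *ᵥ r) = γ • (M *ᵥ (γ ^ k • (M ^ k *ᵥ r))) :=
    fun k => by rw [pow_succ', pow_succ', ← mulVec_mulVec, mulVec_smul, smul_smul]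
  have hcont : Continuous fun v : n → ℝ => γ • (M *ᵥ v) :=
    (continuous_const.matrix_mulVec continuous_id).const_smul γ
  rw [discountedReturn_eq_tsum hγ0 hγ1 hM]
  conv_lhs => rw [hs.tsum_eq_zero_add]
  simp only [hstep, pow_zero, one_smul, one_mulVec]
  exact congrArg (r + ·) (hs.map_tsum (γ • mulVecLin M) hcont).symm

theorem abs_discountedReturn_le (hM : M ∈ rowStochastic ℝ n) {r : n → ℝ} {b : ℝ}
    (hr : ∀ j, |r j| ≤ b) (i : n) : |discountedReturn M γ r i| ≤ b / (1 - γ) := by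
  have hgeo : HasSum (fun k : ℕ => γ ^ k * b) (b / (1 - γ)) := by
    simpa [div_eq_mul_inv, mul_comm] using (hasSum_geometric_of_lt_one hγ0 hγ1).mul_right b
  rw [← Real.norm_eq_abs]
  refine tsum_of_norm_bounded hgeo fun k => ?_
  rw [Real.norm_eq_abs, abs_mul, abs_of_nonneg (pow_nonneg hγ0 k)]
  exact mul_le_mul_of_nonneg_left
    (abs_mulVec_apply_le_of_mem_rowStochastic (pow_mem hM k) hr i) (pow_nonneg hγ0 k)

end Matrix

section PolicyEvaluation

open Matrix

variable {X A : Type*} [Fintype A] (R : X → A → ℝ) (P : X → A → X → ℝ) (π : X → A → ℝ)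

noncomputable def policyKernel : Matrix X X ℝ := Matrix.of fun x x' => ∑ a, π x a * P x a x'

noncomputable def policyReward : X → ℝ := fun x => ∑ a, π x a * R x a

variable {R P π}

theorem abs_policyReward_le (hπ0 : ∀ x a, 0 ≤ π x a) (hπ1 : ∀ x, ∑ a, π x a = 1)
    {Rmax : ℝ} (hR : ∀ x a, |R x a| ≤ Rmax) (x : X) : |policyReward R π x| ≤ Rmax :=
  abs_sum_mul_le_of_sum_eq_one (hπ0 x) (hπ1 x) _ (hR x)

variable [Fintype X]

theorem bellmanOp_eq (γ : ℝ) (V : X → ℝ) :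
    bellmanOp R P π γ V = policyReward R π + γ • (policyKernel P π *ᵥ V) := by
  funext x
  simp only [bellmanOp, policyReward, policyKernel, Pi.add_apply, Pi.smul_apply, smul_eq_mul,
    mulVec, dotProduct, of_apply, Finset.sum_mul, Finset.mul_sum, mul_add, Finset.sum_add_distrib]
  simp only [mul_assoc, mul_left_comm (π x _) γ]
  exact congrArg _ Finset.sum_comm

variable [DecidableEq X]

theorem policyKernel_mem_rowStochastic (hπ0 : ∀ x a, 0 ≤ π x a) (hπ1 : ∀ x, ∑ a, π x a = 1)
    (hP0 : ∀ x a x', 0 ≤ P x a x') (hP1 : ∀ x a, ∑ x', P x a x' = 1) :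
    policyKernel P π ∈ rowStochastic ℝ X := by
  refine mem_rowStochastic_iff_sum.2 ⟨fun x x' => ?_, fun x => ?_⟩
  · exact Finset.sum_nonneg fun a _ => mul_nonneg (hπ0 x a) (hP0 x a x')
  · simp only [policyKernel, of_apply]
    rw [Finset.sum_comm]
    simp [← Finset.mul_sum, hP1, hπ1]

theorem stateDist_eq_pow_apply (x0 : X) (n : ℕ) (x : X) :
    stateDist P π x0 n x = (policyKernel P π ^ n) x0 x := by
  induction n generalizing x with
  | zero => simp [stateDist, one_apply, eq_comm]
  | succ n ih =>
    simp only [stateDist, pow_succ, mul_apply, ih, policyKernel, of_apply, Finset.mul_sum,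
      mul_assoc]

theorem value_eq_discountedReturn (γ : ℝ) :
    value R P π γ = discountedReturn (policyKernel P π) γ (policyReward R π) := by
  funext x0
  simp only [value, discountedReturn, mulVec, dotProduct, policyReward, stateDist_eq_pow_apply,
    Finset.mul_sum, mul_assoc]

variable {γ : ℝ} (hγ0 : 0 ≤ γ) (hγ1 : γ < 1) (hπ0 : ∀ x a, 0 ≤ π x a)
  (hπ1 : ∀ x, ∑ a, π x a = 1) (hP0 : ∀ x a x', 0 ≤ P x a x') (hP1 : ∀ x a, ∑ x', P x a x' = 1)
include hγ0 hγ1 hπ0 hπ1 hP0 hP1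

theorem bellmanOp_value (R : X → A → ℝ) : bellmanOp R P π γ (value R P π γ) = value R P π γ := by
  rw [bellmanOp_eq, value_eq_discountedReturn]
  exact (discountedReturn_eq_add hγ0 hγ1
    (policyKernel_mem_rowStochastic hπ0 hπ1 hP0 hP1) _).symm

theorem abs_value_le {Rmax : ℝ} (hR : ∀ x a, |R x a| ≤ Rmax) (x : X) :
    |value R P π γ x| ≤ Rmax / (1 - γ) := by
  rw [value_eq_discountedReturn]
  exact abs_discountedReturn_le hγ0 hγ1 (policyKernel_mem_rowStochastic hπ0 hπ1 hP0 hP1)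
    (abs_policyReward_le hπ0 hπ1 hR) x

end PolicyEvaluation

theorem norm_le_div_of_abs_le_add_mul_norm {X : Type*} [Fintype X] [Nonempty X] {e : X → ℝ}
    {c γ : ℝ} (hγ1 : γ < 1) (h : ∀ x, |e x| ≤ c + γ * ‖e‖) : ‖e‖ ≤ c / (1 - γ) := by
  obtain ⟨x⟩ := ‹Nonempty X›
  have hnorm : ‖e‖ ≤ c + γ * ‖e‖ :=
    (pi_norm_le_iff_of_nonneg ((abs_nonneg _).trans (h x))).2 h
  rw [le_div_iff₀ (sub_pos.2 hγ1)]
  linarith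

section LatentAbstraction

variable {S A C : Type*} [Fintype S] [DecidableEq C] {P : S → A → S → ℝ} {Φ : S → C}

theorem sum_pushKernel_mul [Fintype C] (s : S) (a : A) (W : C → ℝ) :
    ∑ c, pushKernel P Φ s a c * W c = ∑ s', P s a s' * W (Φ s') := by
  simp only [pushKernel, Finset.sum_mul]
  rw [Finset.sum_comm]
  simp

theorem abs_sum_mul_sub_sum_mul_le [Fintype C] {s : S} {a : A}
    (hP0 : ∀ s', 0 ≤ P s a s') (hP1 : ∑ s', P s a s' = 1) {V : S → ℝ} {W : C → ℝ} {D B : ℝ}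
    (hD : ∀ s', |V s' - W (Φ s')| ≤ D) (hW : ∀ c, |W c| ≤ B) (q : C → ℝ) :
    |∑ s', P s a s' * V s' - ∑ c, q c * W c| ≤
      D + (∑ c, |pushKernel P Φ s a c - q c|) * B := by
  have hsplit : ∑ s', P s a s' * V s' - ∑ c, q c * W c =
      ∑ s', P s a s' * (V s' - W (Φ s')) + ∑ c, (pushKernel P Φ s a c - q c) * W c := by
    simp only [mul_sub, sub_mul, Finset.sum_sub_distrib, sum_pushKernel_mul]
    ring
  rw [hsplit]
  exact (abs_add_le _ _).trans (add_le_add (abs_sum_mul_le_of_sum_eq_one hP0 hP1 _ hD)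
    (abs_sum_mul_le_sum_abs_mul _ _ hW))

theorem abs_bellmanOp_comp_sub_le [Fintype A] [Fintype C] {R : S → A → ℝ}
    {Rbar : C → A → ℝ} {Pbar : C → A → C → ℝ} {π : C → A → ℝ} {γ εR εP D B : ℝ}
    (hγ0 : 0 ≤ γ) (hπ0 : ∀ c a, 0 ≤ π c a) (hπ1 : ∀ c, ∑ a, π c a = 1)
    (hP0 : ∀ s a s', 0 ≤ P s a s') (hP1 : ∀ s a, ∑ s', P s a s' = 1)
    (hεP : ∀ s a, ∑ c', |pushKernel P Φ s a c' - Pbar (Φ s) a c'| ≤ εP)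
    (hεR : ∀ s a, |R s a - Rbar (Φ s) a| ≤ εR) {V : S → ℝ} {W : C → ℝ}
    (hD : ∀ s', |V s' - W (Φ s')| ≤ D) (hW : ∀ c, |W c| ≤ B) (s : S) :
    |bellmanOp R P (fun s a => π (Φ s) a) γ V s - bellmanOp Rbar Pbar π γ W (Φ s)| ≤
      εR + γ * (D + εP * B) := by
  have hB : 0 ≤ B := (abs_nonneg _).trans (hW (Φ s))
  have hsplit : bellmanOp R P (fun s a => π (Φ s) a) γ V s - bellmanOp Rbar Pbar π γ W (Φ s) =
      ∑ a, π (Φ s) a * ((R s a - Rbar (Φ s) a) +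
        γ * (∑ s', P s a s' * V s' - ∑ c, Pbar (Φ s) a c * W c)) := by
    simp only [bellmanOp, ← Finset.sum_sub_distrib]
    exact Finset.sum_congr rfl fun a _ => by ring
  rw [hsplit]
  refine abs_sum_mul_le_of_sum_eq_one (hπ0 (Φ s)) (hπ1 (Φ s)) _ fun a => ?_
  have hexp := abs_sum_mul_sub_sum_mul_le (hP0 s a) (hP1 s a) hD hW (Pbar (Φ s) a)
  calc _ ≤ |R s a - Rbar (Φ s) a| +
        |γ * (∑ s', P s a s' * V s' - ∑ c, Pbar (Φ s) a c * W c)| := abs_add_le _ _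
    _ = |R s a - Rbar (Φ s) a| +
        γ * |∑ s', P s a s' * V s' - ∑ c, Pbar (Φ s) a c * W c| := by
        rw [abs_mul, abs_of_nonneg hγ0]
    _ ≤ εR + γ * (D + εP * B) := by
        gcongr
        · exact hεR s a
        · exact hexp.trans (by gcongr; exact hεP s a)

end LatentAbstraction

theorem value_error_latent_abstraction_general
    {S A C : Type*} [Fintype S] [Fintype A] [Fintype C] [DecidableEq S] [DecidableEq C]
    (R : S → A → ℝ) (P : S → A → S → ℝ) (Φ : S → C)
    (Rbar : C → A → ℝ) (Pbar : C → A → C → ℝ) (π : C → A → ℝ)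
    (γ Rmax εR εP : ℝ) (hγ0 : 0 ≤ γ) (hγ1 : γ < 1)
    (hπ0 : ∀ c a, 0 ≤ π c a) (hπ1 : ∀ c, ∑ a, π c a = 1)
    (hP0 : ∀ s a s', 0 ≤ P s a s') (hP1 : ∀ s a, ∑ s', P s a s' = 1)
    (hPbar0 : ∀ c a c', 0 ≤ Pbar c a c') (hPbar1 : ∀ c a, ∑ c', Pbar c a c' = 1)
    (hRbar : ∀ c a, |Rbar c a| ≤ Rmax)
    (hεP : ∀ s a, ∑ c', |pushKernel P Φ s a c' - Pbar (Φ s) a c'| ≤ εP)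
    (hεR : ∀ s a, |R s a - Rbar (Φ s) a| ≤ εR) :
    ∀ s, |value R P (fun s a => π (Φ s) a) γ s - value Rbar Pbar π γ (Φ s)| ≤
      εR / (1 - γ) + γ * Rmax * εP / (1 - γ) ^ 2 := by
  intro s
  have : Nonempty S := ⟨s⟩
  set V := value R P (fun s a => π (Φ s) a) γ
  set W := value Rbar Pbar π γ
  have hV := bellmanOp_value hγ0 hγ1 (fun x => hπ0 (Φ x)) (fun x => hπ1 (Φ x)) hP0 hP1 R
  have hW := bellmanOp_value hγ0 hγ1 hπ0 hπ1 hPbar0 hPbar1 Rbar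
  have hWB := abs_value_le hγ0 hγ1 hπ0 hπ1 hPbar0 hPbar1 hRbar
  set e : S → ℝ := fun x => V x - W (Φ x)
  have hstep : ∀ x, |e x| ≤ (εR + γ * (εP * (Rmax / (1 - γ)))) + γ * ‖e‖ := fun x => by
    have := abs_bellmanOp_comp_sub_le hγ0 hπ0 hπ1 hP0 hP1 hεP hεR (norm_le_pi_norm e) hWB x
    rw [hV, hW] at this
    linarith
  calc |e s| ≤ ‖e‖ := norm_le_pi_norm e s
    _ ≤ (εR + γ * (εP * (Rmax / (1 - γ)))) / (1 - γ) :=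
      norm_le_div_of_abs_le_add_mul_norm hγ1 hstep
    _ = εR / (1 - γ) + γ * Rmax * εP / (1 - γ) ^ 2 := by
      field_simp [(sub_pos.2 hγ1).ne']

theorem value_error_latent_abstraction
    {S A C : Type*} [Fintype S] [Fintype A] [Fintype C] [DecidableEq S] [DecidableEq C]
    (R : S → A → ℝ) (P : S → A → S → ℝ) (Φ : S → C)
    (Rbar : C → A → ℝ) (Pbar : C → A → C → ℝ) (π : C → A → ℝ)
    (γ Rmax εR εP : ℝ) (hγ0 : 0 ≤ γ) (hγ1 : γ < 1)
    (hπ0 : ∀ c a, 0 ≤ π c a) (hπ1 : ∀ c, ∑ a, π c a = 1)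
    (hP0 : ∀ s a s', 0 ≤ P s a s') (hP1 : ∀ s a, ∑ s', P s a s' = 1)
    (hPbar0 : ∀ c a c', 0 ≤ Pbar c a c') (hPbar1 : ∀ c a, ∑ c', Pbar c a c' = 1)
    (hR : ∀ s a, |R s a| ≤ Rmax) (hRbar : ∀ c a, |Rbar c a| ≤ Rmax)
    (hεP : ∀ s a, ∑ c', |pushKernel P Φ s a c' - Pbar (Φ s) a c'| ≤ εP)
    (hεR : ∀ s a, |R s a - Rbar (Φ s) a| ≤ εR) :
    ∀ s, |value R P (fun s a => π (Φ s) a) γ s - value Rbar Pbar π γ (Φ s)| ≤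
      εR / (1 - γ) + γ * Rmax * εP / (1 - γ) ^ 2 :=
  value_error_latent_abstraction_general R P Φ Rbar Pbar π γ Rmax εR εP hγ0 hγ1 hπ0 hπ1 hP0 hP1
    hPbar0 hPbar1 hRbar hεP hεR
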